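/- Lemma (no repeated state in symmetric unanimity chains, Lemma 12): Suppose a symmetric protocol solves uniform bipartition with designated initial state ini_r on all complete communication graphs under global fairness, for populations of size 4. Consider the sequence of states p₀ = ini_r, p₁, p₂, ... defined by the symmetric transitions (p_i, p_i) → (p_{i+1}, p_{i+1}). Then p_i ≠ p_{i+1} for all i; i.e., no state q in this chain satisfies (q,q)→(q,q). -/

import Mathlib

/-- Colors. -/
inductive Color2 : Type
  | red | blue
deriving DecidableEq

/-- One step of a deterministic population protocol on a complete graph. -/
def Step {Q : Type} {n : ℕ} (δ : Q → Q → Q × Q) (C C' : Fin n → Q) : Prop :=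
  ∃ i j : Fin n, i ≠ j ∧
    C' = Function.update (Function.update C i (δ (C i) (C j)).1) j
          (δ (C i) (C j)).2

/-- Number of agents with color `c`. -/
def cntCol {Q : Type} {n : ℕ} (f : Q → Color2) (C : Fin n → Q) (c : Color2) : ℕ :=
  (Finset.univ.filter fun a => f (C a) = c).card

/-- Global fairness of an execution. -/
def GloballyFair {Q : Type} {n : ℕ} (δ : Q → Q → Q × Q) (e : ℕ → Fin n → Q) : Prop :=
  ∀ C C' : Fin n → Q, Step δ C C' →
    {t | e t = C}.Infinite → {t | e t = C'}.Infinite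

/-- A configuration is stable for uniform bipartition: group sizes differ by at
most one and no agent ever changes its color afterwards. -/
def StableBip {Q : Type} {n : ℕ} (δ : Q → Q → Q × Q) (f : Q → Color2)
    (C : Fin n → Q) : Prop :=
  (cntCol f C .red ≤ cntCol f C .blue + 1 ∧ cntCol f C .blue ≤ cntCol f C .red + 1) ∧
  ∀ C', Relation.ReflTransGen (Step δ) C C' → ∀ a, f (C' a) = f (C a)

/-- The protocol solves uniform bipartition on the 4-agent complete graph with
designated initial state `inir` under global fairness. -/
def Solves4 {Q : Type} (δ : Q → Q → Q × Q) (f : Q → Color2) (inir : Q) : Prop :=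
  ∀ e : ℕ → Fin 4 → Q, e 0 = (fun _ => inir) →
    (∀ t, Step δ (e t) (e (t + 1))) → GloballyFair δ e →
    ∃ t, StableBip δ f (e t)

/-!
If the chain `p₀ = ini_r, p_{i+1} = s p_i` with `(p, p) → (s p, s p)` had `s q = q` for some
`q = p_i`, then letting the pairs of agents `{0, 1}` and `{2, 3}` of a four-agent population take
turns meeting drives every agent up the chain to `q` in `2 i` steps, after which the configuration
is constant. Every interaction in the all-`q` configuration leaves it unchanged, so this execution
is globally fair; hence it must reach a stable configuration. That configuration can still reach
the all-`q` one, so all agents already carry the colour of `q`, and the bipartition is not uniform.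
-/

open Function

section Protocol

variable {Q : Type} {n : ℕ} {δ : Q → Q → Q × Q}

theorem diag_eq_of_symm (hsym : ∀ p q : Q, δ q p = ((δ p q).2, (δ p q).1)) (p : Q) :
    δ p p = ((δ p p).1, (δ p p).1) :=
  Prod.ext rfl (congrArg Prod.fst (hsym p p)).symm

theorem step_iterate_of_meet {s : Q → Q} (hδ : ∀ p, δ p p = (s p, s p)) (x : Q)
    {l l' : Fin n → ℕ} {a b : Fin n} (hab : a ≠ b) (hl : l a = l b)
    (ha : l' a = l a + 1) (hb : l' b = l b + 1) (hc : ∀ c, c ≠ a → c ≠ b → l' c = l c) :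
    Step δ (fun c => s^[l c] x) (fun c => s^[l' c] x) := by
  refine ⟨a, b, hab, funext fun c => ?_⟩
  simp only [← hl, hδ, ← iterate_succ_apply' s]
  by_cases hcb : c = b
  · subst hcb; rw [update_self, hb, hl]
  by_cases hca : c = a
  · subst hca; rw [update_of_ne hcb, update_self, ha]
  · rw [update_of_ne hcb, update_of_ne hca, hc c hca hcb]

theorem step_const_eq {q : Q} (hq : δ q q = (q, q)) {C : Fin n → Q}
    (h : Step δ (fun _ => q) C) : C = fun _ => q := by
  obtain ⟨i, j, -, rfl⟩ := h
  simp only [hq, update_eq_self]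

theorem globallyFair_of_eventually_eq {e : ℕ → Fin n → Q} {C : Fin n → Q}
    (hC : ∀ C', Step δ C C' → C' = C) (T : ℕ) (he : ∀ t, T ≤ t → e t = C) :
    GloballyFair δ e := by
  intro D D' hD hinf
  obtain ⟨t, htD, hTt⟩ := hinf.exists_gt T
  have hDC : D = C := htD ▸ he t hTt.le
  subst hDC
  rwa [hC D' hD]

theorem reflTransGen_of_le {e : ℕ → Fin n → Q} (he : ∀ t, Step δ (e t) (e (t + 1)))
    {t t' : ℕ} (htt' : t ≤ t') : Relation.ReflTransGen (Step δ) (e t) (e t') := by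
  induction htt' with
  | refl => exact .refl
  | step _ ih => exact ih.tail (he _)

theorem cntCol_of_forall_eq {f : Q → Color2} {C : Fin n → Q} {c : Color2}
    (h : ∀ a, f (C a) = c) (c' : Color2) : cntCol f C c' = if c = c' then n else 0 := by
  unfold cntCol
  split_ifs with hc <;> simp [h, hc]

theorem StableBip.not_forall_color_eq {f : Q → Color2} {C : Fin n → Q} (hn : 2 ≤ n)
    (hC : StableBip δ f C) (c : Color2) : ¬ ∀ a, f (C a) = c := by
  intro h
  obtain ⟨⟨hrb, hbr⟩, -⟩ := hC
  rw [cntCol_of_forall_eq h, cntCol_of_forall_eq h] at hrb hbr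
  cases c <;> simp at hrb hbr <;> omega

theorem StableBip.not_reflTransGen_const {f : Q → Color2} {C : Fin n → Q} (hn : 2 ≤ n)
    (hC : StableBip δ f C) {q : Q} (hreach : Relation.ReflTransGen (Step δ) C fun _ => q) :
    False :=
  hC.not_forall_color_eq hn (f q) fun a => (hC.2 _ hreach a).symm

end Protocol

section AlternatingExecution

variable {Q : Type} (s : Q → Q) (x : Q)

/-- Agents `0, 1` meet at even times and agents `2, 3` at odd times; each meeting moves both
partners one step along the chain `x, s x, s (s x), …`. -/
def alternatingLevel (t : ℕ) (a : Fin 4) : ℕ :=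
  if a.val < 2 then (t + 1) / 2 else t / 2

def alternatingExecution (t : ℕ) : Fin 4 → Q :=
  fun a => s^[alternatingLevel t a] x

theorem alternatingExecution_zero : alternatingExecution s x 0 = fun _ => x := by
  funext a
  simp [alternatingExecution, alternatingLevel]

theorem alternatingExecution_step {δ : Q → Q → Q × Q} (hδ : ∀ p, δ p p = (s p, s p)) (t : ℕ) :
    Step δ (alternatingExecution s x t) (alternatingExecution s x (t + 1)) := by
  rcases Nat.even_or_odd t with ⟨k, rfl⟩ | ⟨k, rfl⟩
  · refine step_iterate_of_meet hδ x (a := 0) (b := 1) (by decide) ?_ ?_ ?_ ?_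
    rotate_right
    · intro c; fin_cases c <;> simp [alternatingLevel] <;> omega
    all_goals simp [alternatingLevel] <;> omega
  · refine step_iterate_of_meet hδ x (a := 2) (b := 3) (by decide) ?_ ?_ ?_ ?_
    rotate_right
    · intro c; fin_cases c <;> simp [alternatingLevel] <;> omega
    all_goals simp [alternatingLevel] <;> omega

theorem alternatingExecution_eventually_eq {i : ℕ} (hfix : s (s^[i] x) = s^[i] x) {t : ℕ}
    (ht : 2 * i ≤ t) : alternatingExecution s x t = fun _ => s^[i] x := by
  funext a
  have hle : i ≤ alternatingLevel t a := by unfold alternatingLevel; split <;> omega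
  rw [alternatingExecution, ← Nat.sub_add_cancel hle, iterate_add_apply]
  exact (IsFixedPt.iterate hfix _).eq

end AlternatingExecution

/-- Lemma 12: in the chain of symmetric transitions from the initial state,
consecutive states are distinct (no state in the chain is a fixed point). -/
theorem stmt17 (Q : Type) (δ : Q → Q → Q × Q)
    (hsym : ∀ p q : Q, δ q p = ((δ p q).2, (δ p q).1))
    (f : Q → Color2) (inir : Q) (hsolve : Solves4 δ f inir) :
    ∀ i : ℕ, (fun q => (δ q q).1)^[i + 1] inir ≠ (fun q => (δ q q).1)^[i] inir := by
  intro i h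
  set s : Q → Q := fun q => (δ q q).1
  set q := s^[i] inir
  have hδ : ∀ p, δ p p = (s p, s p) := diag_eq_of_symm hsym
  have hfix : s q = q := (iterate_succ_apply' s i inir).symm.trans h
  have hconst (t : ℕ) (ht : 2 * i ≤ t) := alternatingExecution_eventually_eq s inir hfix ht
  have hstep := alternatingExecution_step s inir hδ
  obtain ⟨t, hstab⟩ := hsolve _ (alternatingExecution_zero s inir) hstep
    (globallyFair_of_eventually_eq (fun _ => step_const_eq (hfix ▸ hδ q :)) (2 * i) hconst)
  have hreach := reflTransGen_of_le hstep (Nat.le_add_right t (2 * i))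
  rw [hconst (t + 2 * i) (by omega)] at hreach
  exact hstab.not_reflTransGen_const (by norm_num) hreach
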